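/- Let f = (f₁,…,f_m) : ℝⁿ → ℝᵐ be a strongly convex C¹ mapping, where fᵢ has convexity parameter αᵢ > 0. Let Kᵢ be the maximum of |fᵢ(x) - fᵢ(y)| over x, y in the Pareto set X*(f), α₀ = min αᵢ, K₀ = max Kᵢ, and let x*(w) denote the unique minimizer of ∑ᵢ wᵢ fᵢ for w ∈ Δ^{m-1}. Then for any w, w̃ ∈ Δ^{m-1}, ‖x*(w) - x*(w̃)‖ ≤ √((K₀/α₀) ∑ᵢ |wᵢ - w̃ᵢ|). -/

import Mathlib

/-!
Quadratic growth of the `α₀`-strongly convex scalarization `gᵥ = ∑ vᵢ fᵢ` at its minimizer gives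
`α₀ / 2 * ‖x*(v) - y‖² ≤ gᵥ y - gᵥ (x*(v))` for every `y`. In particular a point dominating
`x*(v)` must equal it, so `x*(v)` lies in the Pareto set. Adding the two growth inequalities for
`w` and `w'` gives `α₀ ‖x*(w) - x*(w')‖² ≤ ∑ (wᵢ - w'ᵢ) (fᵢ(x*(w')) - fᵢ(x*(w)))`, and each
difference of objective values between the two Pareto points is at most `K₀` in absolute value.
-/

/-- `f` is strongly convex on `ℝⁿ` with convexity parameter `α`. -/
def StronglyConvexWith {E : Type*} [NormedAddCommGroup E] [NormedSpace ℝ E]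
    (α : ℝ) (f : E → ℝ) : Prop :=
  ∀ x y : E, ∀ t ∈ Set.Icc (0:ℝ) 1,
    f (t • x + (1 - t) • y) ≤ t * f x + (1 - t) * f y - α / 2 * (t * (1 - t) * ‖x - y‖ ^ 2)

/-- The Pareto set of `f : ℝⁿ → ℝᵐ`. -/
def ParetoSet {E : Type*} {m : ℕ} (f : E → EuclideanSpace ℝ (Fin m)) : Set E :=
  {x | ¬ ∃ y, (∀ i, f y i ≤ f x i) ∧ ∃ j, f y j < f x j}

open Filter Topology

variable {E : Type*} [NormedAddCommGroup E] [NormedSpace ℝ E]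

namespace StronglyConvexWith

theorem mono {α β : ℝ} {f : E → ℝ} (hf : StronglyConvexWith α f) (hβα : β ≤ α) :
    StronglyConvexWith β f := by
  intro x y t ht
  have hQ : 0 ≤ t * (1 - t) * ‖x - y‖ ^ 2 :=
    mul_nonneg (mul_nonneg ht.1 (sub_nonneg.2 ht.2)) (sq_nonneg _)
  nlinarith [hf x y t ht]

theorem weighted_sum {ι : Type*} (s : Finset ι) {w α : ι → ℝ} {f : ι → E → ℝ}
    (hw : ∀ i ∈ s, 0 ≤ w i) (hf : ∀ i ∈ s, StronglyConvexWith (α i) (f i)) :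
    StronglyConvexWith (∑ i ∈ s, w i * α i) (fun x => ∑ i ∈ s, w i * f i x) := by
  intro x y t ht
  calc ∑ i ∈ s, w i * f i (t • x + (1 - t) • y)
      ≤ ∑ i ∈ s, w i * (t * f i x + (1 - t) * f i y
          - α i / 2 * (t * (1 - t) * ‖x - y‖ ^ 2)) :=
        Finset.sum_le_sum fun i hi => mul_le_mul_of_nonneg_left (hf i hi x y t ht) (hw i hi)
    _ = _ := by
        simp only [Finset.mul_sum, Finset.sum_div, Finset.sum_mul, ← Finset.sum_add_distrib,
          ← Finset.sum_sub_distrib]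
        exact Finset.sum_congr rfl fun i _ => by ring

theorem weighted_sum_of_mem_stdSimplex {ι : Type*} [Fintype ι] {w α : ι → ℝ} {β : ℝ}
    {f : ι → E → ℝ} (hw : w ∈ stdSimplex ℝ ι) (hβ : ∀ i, β ≤ α i)
    (hf : ∀ i, StronglyConvexWith (α i) (f i)) :
    StronglyConvexWith β (fun x => ∑ i, w i * f i x) := by
  refine (weighted_sum Finset.univ (fun i _ => hw.1 i) fun i _ => hf i).mono ?_
  calc β = ∑ i, w i * β := by rw [← Finset.sum_mul, hw.2, one_mul]
    _ ≤ ∑ i, w i * α i := Finset.sum_le_sum fun i _ => mul_le_mul_of_nonneg_left (hβ i) (hw.1 i)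

theorem half_mul_sq_norm_sub_le {α : ℝ} {g : E → ℝ} (hg : StronglyConvexWith α g) {x : E}
    (hx : ∀ y, g x ≤ g y) (y : E) :
    α / 2 * ‖x - y‖ ^ 2 ≤ g y - g x := by
  -- `g x ≤ g (t • x + (1 - t) • y)`; divide by `1 - t` and let `t → 1`.
  have hlt : ∀ t ∈ Set.Ioo (0 : ℝ) 1, t * (α / 2 * ‖x - y‖ ^ 2) ≤ g y - g x := by
    intro t ⟨ht0, ht1⟩
    have hconv := hg x y t ⟨ht0.le, ht1.le⟩
    have hmin := hx (t • x + (1 - t) • y)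
    have h1t : 0 < 1 - t := sub_pos.mpr ht1
    refine le_of_mul_le_mul_left ?_ h1t
    linarith
  have hlim : Tendsto (fun t : ℝ => t * (α / 2 * ‖x - y‖ ^ 2)) (𝓝[<] 1)
      (𝓝 (1 * (α / 2 * ‖x - y‖ ^ 2))) :=
    ((continuous_id.mul continuous_const).tendsto 1).mono_left nhdsWithin_le_nhds
  simpa using le_of_tendsto hlim (eventually_of_mem (Ioo_mem_nhdsLT zero_lt_one) hlt)

end StronglyConvexWith

theorem mem_paretoSet_of_forall_weighted_sum_le {m : ℕ} {f : E → EuclideanSpace ℝ (Fin m)}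
    {w : Fin m → ℝ} (hw : ∀ i, 0 ≤ w i) {α : ℝ} (hα : 0 < α)
    (hg : StronglyConvexWith α (fun x => ∑ i, w i * f x i)) {x : E}
    (hx : ∀ y, ∑ i, w i * f x i ≤ ∑ i, w i * f y i) :
    x ∈ ParetoSet f := by
  rintro ⟨y, hdom, j, hj⟩
  have hgy : ∑ i, w i * f y i ≤ ∑ i, w i * f x i :=
    Finset.sum_le_sum fun i _ => mul_le_mul_of_nonneg_left (hdom i) (hw i)
  have hgap := hg.half_mul_sq_norm_sub_le hx y
  have hxy : x = y := by
    by_contra hne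
    have : 0 < α / 2 * ‖x - y‖ ^ 2 := by
      have := norm_pos_iff.mpr (sub_ne_zero.mpr hne)
      positivity
    linarith
  exact hj.ne (congrArg (f · j) hxy).symm

theorem mul_sq_norm_sub_le_sum_mul {ι : Type*} [Fintype ι] {f : ι → E → ℝ} {w w' : ι → ℝ}
    {α : ℝ} (hg : StronglyConvexWith α (fun x => ∑ i, w i * f i x))
    (hg' : StronglyConvexWith α (fun x => ∑ i, w' i * f i x)) {x y : E}
    (hx : ∀ z, ∑ i, w i * f i x ≤ ∑ i, w i * f i z)
    (hy : ∀ z, ∑ i, w' i * f i y ≤ ∑ i, w' i * f i z) :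
    α * ‖x - y‖ ^ 2 ≤ ∑ i, (w i - w' i) * (f i y - f i x) := by
  have hxy := hg.half_mul_sq_norm_sub_le hx y
  have hyx := hg'.half_mul_sq_norm_sub_le hy x
  rw [norm_sub_rev] at hyx
  have hsum : ∑ i, (w i - w' i) * (f i y - f i x)
      = (∑ i, w i * f i y - ∑ i, w i * f i x) + (∑ i, w' i * f i x - ∑ i, w' i * f i y) := by
    simp only [← Finset.sum_sub_distrib, ← Finset.sum_add_distrib]
    exact Finset.sum_congr rfl fun i _ => by ring
  linarith

theorem Finset.sum_mul_le_mul_sum_abs {ι : Type*} (s : Finset ι) (a b : ι → ℝ) {C : ℝ}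
    (hb : ∀ i ∈ s, |b i| ≤ C) :
    ∑ i ∈ s, a i * b i ≤ C * ∑ i ∈ s, |a i| := by
  rw [Finset.mul_sum]
  refine Finset.sum_le_sum fun i hi => ?_
  calc a i * b i ≤ |a i| * |b i| := (le_abs_self _).trans (abs_mul _ _).le
    _ ≤ |a i| * C := mul_le_mul_of_nonneg_left (hb i hi) (abs_nonneg _)
    _ = C * |a i| := mul_comm _ _

theorem xstar_holder_estimate_general
    (n m : ℕ) (f : EuclideanSpace ℝ (Fin n) → EuclideanSpace ℝ (Fin m))
    (α : Fin m → ℝ) (hα : ∀ i, 0 < α i)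
    (hsc : ∀ i, StronglyConvexWith (α i) (fun x => f x i))
    (K : Fin m → ℝ)
    (hK : ∀ i, IsGreatest
      {r : ℝ | ∃ x ∈ ParetoSet f, ∃ y ∈ ParetoSet f, r = |f x i - f y i|} (K i))
    (α₀ K₀ : ℝ)
    (hα₀ : IsLeast (Set.range α) α₀) (hK₀ : IsGreatest (Set.range K) K₀)
    (xstar : (Fin m → ℝ) → EuclideanSpace ℝ (Fin n))
    (hxstar : ∀ w ∈ stdSimplex ℝ (Fin m),
      ∀ y, ∑ i, w i * f (xstar w) i ≤ ∑ i, w i * f y i) :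
    ∀ w ∈ stdSimplex ℝ (Fin m), ∀ w' ∈ stdSimplex ℝ (Fin m),
      ‖xstar w - xstar w'‖ ≤ Real.sqrt (K₀ / α₀ * ∑ i, |w i - w' i|) := by
  intro w hw w' hw'
  have hα₀_pos : 0 < α₀ := by
    obtain ⟨⟨i, rfl⟩, -⟩ := hα₀
    exact hα i
  have hconv : ∀ v ∈ stdSimplex ℝ (Fin m), StronglyConvexWith α₀ (fun x => ∑ i, v i * f x i) :=
    fun v hv => .weighted_sum_of_mem_stdSimplex hv (fun i => hα₀.2 ⟨i, rfl⟩) hsc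
  have hpareto : ∀ v ∈ stdSimplex ℝ (Fin m), xstar v ∈ ParetoSet f := fun v hv =>
    mem_paretoSet_of_forall_weighted_sum_le hv.1 hα₀_pos (hconv v hv) (hxstar v hv)
  have hgap : ∀ i ∈ Finset.univ, |f (xstar w') i - f (xstar w) i| ≤ K₀ := fun i _ =>
    ((hK i).2 ⟨_, hpareto w' hw', _, hpareto w hw, rfl⟩).trans (hK₀.2 ⟨i, rfl⟩)
  have hupper := Finset.sum_mul_le_mul_sum_abs Finset.univ (fun i => w i - w' i) _ hgap
  have hlower := mul_sq_norm_sub_le_sum_mul (f := fun i x => f x i)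
    (hconv w hw) (hconv w' hw') (hxstar w hw) (hxstar w' hw')
  refine Real.le_sqrt_of_sq_le ?_
  rw [div_mul_eq_mul_div, le_div_iff₀ hα₀_pos]
  linarith

theorem xstar_holder_estimate
    (n m : ℕ) (f : EuclideanSpace ℝ (Fin n) → EuclideanSpace ℝ (Fin m))
    (α : Fin m → ℝ) (hα : ∀ i, 0 < α i)
    (hsc : ∀ i, StronglyConvexWith (α i) (fun x => f x i))
    (hf : ContDiff ℝ 1 f)
    (K : Fin m → ℝ)
    (hK : ∀ i, IsGreatest
      {r : ℝ | ∃ x ∈ ParetoSet f, ∃ y ∈ ParetoSet f, r = |f x i - f y i|} (K i))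
    (α₀ K₀ : ℝ)
    (hα₀ : IsLeast (Set.range α) α₀) (hK₀ : IsGreatest (Set.range K) K₀)
    (xstar : (Fin m → ℝ) → EuclideanSpace ℝ (Fin n))
    (hxstar : ∀ w ∈ stdSimplex ℝ (Fin m),
      ∀ y, ∑ i, w i * f (xstar w) i ≤ ∑ i, w i * f y i) :
    ∀ w ∈ stdSimplex ℝ (Fin m), ∀ w' ∈ stdSimplex ℝ (Fin m),
      ‖xstar w - xstar w'‖ ≤ Real.sqrt (K₀ / α₀ * ∑ i, |w i - w' i|) :=
  xstar_holder_estimate_general n m f α hα hsc K hK α₀ K₀ hα₀ hK₀ xstar hxstar
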